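/- arXiv:2206.10514 — 2 statements merged into one kernel-verified Lean document; each statement's English description precedes it below -/
import Mathlib

section
/- Let μ ≤_cx ν in 𝒫₁(B) with B separable Banach. If (μₙ) and (νₙ) are sequences in 𝒫₁(B) with μₙ → μ and νₙ → ν in 𝒲₁, πₙ ∈ 𝓜(μₙ, νₙ) for each n, and πₙ → π̃ weakly, then π̃ ∈ 𝓜(μ, ν), i.e. π̃ is a martingale coupling of μ and ν. -/
/-!
Testing against bounded continuous functions identifies the marginals of the limit `π̃`. For the
martingale property, pair `g(x) • (y - x)` with a functional `L`: the scalar integrand is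
continuous and bounded by `C (‖x‖ + ‖y‖)`, and the integrals of `‖x‖ + ‖y‖` against `πₙ`
converge because the marginals converge in `𝒲₁`. For such a dominating `h`, `∫ f dπₙ → ∫ f dπ̃`
whenever `|f| ≤ h`: truncating `h ± f` at a level `M` shows that `∫ (h ± f)` is lower
semicontinuous along weak convergence, and subtracting the convergent `∫ h` squeezes `∫ f`.
Hence `L (∫ g(x) • (y - x) dπ̃) = lim L (∫ g(x) • (y - x) dπₙ) = 0` for every `L`.
-/

open MeasureTheory Filter Topology BoundedContinuousFunction

section WeakConvergence

variable {X : Type*} [TopologicalSpace X] [MeasurableSpace X] [OpensMeasurableSpace X]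
  {ι : Type*} {l : Filter ι} {ρ : ι → Measure X} {ρ' : Measure X}

lemma tendsto_integral_min_natCast {u : X → ℝ} (hu : Continuous u) (hint : Integrable u ρ') :
    Tendsto (fun M : ℕ => ∫ x, min (u x) M ∂ρ') atTop (𝓝 (∫ x, u x ∂ρ')) := by
  refine tendsto_integral_of_dominated_convergence (fun x => |u x|)
    (fun M => (hu.min continuous_const).aestronglyMeasurable) hint.abs
    (fun M => ae_of_all _ fun x => ?_) (ae_of_all _ fun x => ?_)
  · rw [Real.norm_eq_abs, abs_le]
    exact ⟨le_min (neg_abs_le _) ((neg_nonpos.2 (abs_nonneg _)).trans M.cast_nonneg),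
      (min_le_left _ _).trans (le_abs_self _)⟩
  · exact tendsto_const_nhds.congr' <| (eventually_ge_atTop ⌈u x⌉₊).mono fun M hM =>
      (min_eq_left <| (Nat.le_ceil _).trans (by exact_mod_cast hM)).symm

lemma eventually_lt_integral_of_lt_integral [∀ i, IsFiniteMeasure (ρ i)]
    (hρ : ∀ F : X →ᵇ ℝ, Tendsto (fun i => ∫ x, F x ∂ρ i) l (𝓝 (∫ x, F x ∂ρ')))
    {u : X → ℝ} (hu : Continuous u) (hu₀ : 0 ≤ u)
    (hint : ∀ᶠ i in l, Integrable u (ρ i)) (hint' : Integrable u ρ')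
    {c : ℝ} (hc : c < ∫ x, u x ∂ρ') : ∀ᶠ i in l, c < ∫ x, u x ∂ρ i := by
  obtain ⟨M, hM⟩ := ((tendsto_integral_min_natCast hu hint').eventually
    (eventually_gt_nhds hc)).exists
  let F : X →ᵇ ℝ := .ofNormedAddCommGroup (fun x => min (u x) M) (hu.min continuous_const) M
    fun x => by
      rw [Real.norm_of_nonneg (le_min (hu₀ x) M.cast_nonneg)]
      exact min_le_right _ _
  filter_upwards [(hρ F).eventually (eventually_gt_nhds hM), hint] with i hi hui
  exact hi.trans_le <| integral_mono (F.integrable _) hui fun x => min_le_left _ _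

lemma eventually_lt_integral_of_abs_le [∀ i, IsFiniteMeasure (ρ i)]
    (hρ : ∀ F : X →ᵇ ℝ, Tendsto (fun i => ∫ x, F x ∂ρ i) l (𝓝 (∫ x, F x ∂ρ')))
    {f h : X → ℝ} (hf : Continuous f) (hh : Continuous h) (hfh : ∀ x, |f x| ≤ h x)
    (hint : ∀ᶠ i in l, Integrable h (ρ i)) (hint' : Integrable h ρ')
    (hmom : Tendsto (fun i => ∫ x, h x ∂ρ i) l (𝓝 (∫ x, h x ∂ρ')))
    {c : ℝ} (hc : c < ∫ x, f x ∂ρ') : ∀ᶠ i in l, c < ∫ x, f x ∂ρ i := by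
  have integrable_f {m : Measure X} (hm : Integrable h m) : Integrable f m :=
    hm.mono' hf.aestronglyMeasurable (ae_of_all _ fun x => hfh x)
  have hd : 0 < ∫ x, f x ∂ρ' - c := sub_pos.2 hc
  -- `h + f ≥ 0`, so its integral is lower semicontinuous, while `∫ h` converges.
  have hsum := eventually_lt_integral_of_lt_integral hρ (u := fun x => h x + f x) (hh.add hf)
    (fun x => show 0 ≤ h x + f x by linarith [neg_le_abs (f x), hfh x])
    (hint.mono fun i hi => hi.add (integrable_f hi)) (hint'.add (integrable_f hint'))
    (c := ∫ x, h x + f x ∂ρ' - (∫ x, f x ∂ρ' - c) / 2) (by linarith)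
  filter_upwards [hsum, hint, hmom.eventually (eventually_lt_nhds
    (lt_add_of_pos_right _ (half_pos hd)))] with i hi hhi hmi
  rw [integral_add hhi (integrable_f hhi), integral_add hint' (integrable_f hint')] at hi
  linarith

theorem tendsto_integral_of_abs_le [∀ i, IsFiniteMeasure (ρ i)]
    (hρ : ∀ F : X →ᵇ ℝ, Tendsto (fun i => ∫ x, F x ∂ρ i) l (𝓝 (∫ x, F x ∂ρ')))
    {f h : X → ℝ} (hf : Continuous f) (hh : Continuous h) (hfh : ∀ x, |f x| ≤ h x)
    (hint : ∀ᶠ i in l, Integrable h (ρ i)) (hint' : Integrable h ρ')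
    (hmom : Tendsto (fun i => ∫ x, h x ∂ρ i) l (𝓝 (∫ x, h x ∂ρ'))) :
    Tendsto (fun i => ∫ x, f x ∂ρ i) l (𝓝 (∫ x, f x ∂ρ')) := by
  refine tendsto_order.2 ⟨fun c hc => eventually_lt_integral_of_abs_le hρ hf hh hfh hint hint'
    hmom hc, fun c hc => ?_⟩
  have hneg := eventually_lt_integral_of_abs_le hρ (f := fun x => -f x) hf.neg hh
    (fun x => (abs_neg (f x)).trans_le (hfh x)) hint hint' hmom (c := -c)
    (by rw [integral_neg]; exact neg_lt_neg hc)
  filter_upwards [hneg] with i hi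
  rw [integral_neg] at hi
  exact lt_of_neg_lt_neg hi

theorem integral_eq_zero_of_tendsto_of_norm_le {E : Type*} [NormedAddCommGroup E]
    [NormedSpace ℝ E] [CompleteSpace E] [SecondCountableTopologyEither X E] [l.NeBot]
    [∀ i, IsFiniteMeasure (ρ i)]
    (hρ : ∀ F : X →ᵇ ℝ, Tendsto (fun i => ∫ x, F x ∂ρ i) l (𝓝 (∫ x, F x ∂ρ')))
    {G : X → E} {h : X → ℝ} {C : ℝ} (hG : Continuous G) (hh : Continuous h)
    (hGh : ∀ x, ‖G x‖ ≤ C * h x)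
    (hint : ∀ᶠ i in l, Integrable h (ρ i)) (hint' : Integrable h ρ')
    (hmom : Tendsto (fun i => ∫ x, h x ∂ρ i) l (𝓝 (∫ x, h x ∂ρ')))
    (hzero : ∀ᶠ i in l, ∫ x, G x ∂ρ i = 0) : ∫ x, G x ∂ρ' = 0 := by
  have integrable_G {m : Measure X} (hm : Integrable h m) : Integrable G m :=
    (hm.const_mul C).mono' hG.aestronglyMeasurable (ae_of_all _ hGh)
  refine SeparatingDual.eq_zero_of_forall_dual_eq_zero (R := ℝ) fun L => ?_
  rw [← L.integral_comp_comm (integrable_G hint')]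
  have hLG : Tendsto (fun i => ∫ x, L (G x) ∂ρ i) l (𝓝 (∫ x, L (G x) ∂ρ')) :=
    tendsto_integral_of_abs_le hρ (h := fun x => ‖L‖ * C * h x) (L.continuous.comp hG)
      (continuous_const.mul hh)
      (fun x => (L.le_opNorm (G x)).trans (by grw [hGh x, mul_assoc]))
      (hint.mono fun i hi => hi.const_mul (‖L‖ * C)) (hint'.const_mul _)
      (by simpa only [integral_const_mul] using hmom.const_mul (‖L‖ * C))
  refine tendsto_nhds_unique hLG (tendsto_const_nhds.congr' ?_)
  filter_upwards [hzero, hint] with i hz hi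
  rw [L.integral_comp_comm (integrable_G hi), hz, map_zero]

theorem map_eq_of_tendsto_integral {Y : Type*} [TopologicalSpace Y] [MeasurableSpace Y]
    [HasOuterApproxClosed Y] [BorelSpace Y] [l.NeBot] [IsFiniteMeasure ρ']
    (hρ : ∀ F : X →ᵇ ℝ, Tendsto (fun i => ∫ x, F x ∂ρ i) l (𝓝 (∫ x, F x ∂ρ')))
    {p : X → Y} (hp : Continuous p) {m : Measure Y} [IsFiniteMeasure m]
    (hm : ∀ F : Y →ᵇ ℝ, Tendsto (fun i => ∫ y, F y ∂(ρ i).map p) l (𝓝 (∫ y, F y ∂m))) :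
    ρ'.map p = m := by
  refine ext_of_forall_integral_eq_of_IsFiniteMeasure fun F => tendsto_nhds_unique ?_ (hm F)
  have integral_map_eq (ν : Measure X) :
      ∫ y, F y ∂ν.map p = ∫ x, F.compContinuous ⟨p, hp⟩ x ∂ν :=
    integral_map hp.aemeasurable F.continuous.aestronglyMeasurable
  simpa only [integral_map_eq] using hρ (F.compContinuous ⟨p, hp⟩)

end WeakConvergence

lemma BoundedContinuousFunction.exists_abs_le_mul_one_add_norm {E : Type*}
    [SeminormedAddCommGroup E] (F : E →ᵇ ℝ) : ∃ C, ∀ x, |F x| ≤ C * (1 + ‖x‖) :=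
  ⟨‖F‖, fun x => (F.norm_coe_le_norm x).trans <|
    le_mul_of_one_le_right (norm_nonneg F) (le_add_of_nonneg_right (norm_nonneg x))⟩

section Moments

variable {E F : Type*} [NormedAddCommGroup E] [MeasurableSpace E]
  [NormedAddCommGroup F] [MeasurableSpace F]

lemma eventually_integrable_norm_of_tendsto [OpensMeasurableSpace E] {ι : Type*} {l : Filter ι}
    {m : ι → Measure E} {m' : Measure E} [IsProbabilityMeasure m']
    (hm' : Integrable (fun x => ‖x‖) m')
    (h : Tendsto (fun i => ∫ x, 1 + ‖x‖ ∂m i) l (𝓝 (∫ x, 1 + ‖x‖ ∂m'))) :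
    ∀ᶠ i in l, Integrable (fun x => ‖x‖) (m i) := by
  have hpos : 0 < ∫ x, 1 + ‖x‖ ∂m' := by
    rw [integral_add (integrable_const 1) hm', integral_const, probReal_univ, one_smul]
    exact add_pos_of_pos_of_nonneg one_pos (integral_nonneg fun x => norm_nonneg x)
  filter_upwards [h.eventually (eventually_gt_nhds hpos)] with i hi
  -- a non-integrable function has integral `0`
  exact (Integrable.of_integral_ne_zero hi.ne').mono' continuous_norm.aestronglyMeasurable
    (ae_of_all _ fun x => by simp)

lemma integrable_norm_fst_add_norm_snd {ρ : Measure (E × F)}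
    (h₁ : Integrable (fun x => ‖x‖) ρ.fst) (h₂ : Integrable (fun y => ‖y‖) ρ.snd) :
    Integrable (fun q : E × F => ‖q.1‖ + ‖q.2‖) ρ :=
  (h₁.comp_measurable measurable_fst).add (h₂.comp_measurable measurable_snd)

lemma integral_norm_fst_add_norm_snd [OpensMeasurableSpace E] [OpensMeasurableSpace F]
    {ρ : Measure (E × F)} (h₁ : Integrable (fun x => ‖x‖) ρ.fst)
    (h₂ : Integrable (fun y => ‖y‖) ρ.snd) :
    ∫ q : E × F, ‖q.1‖ + ‖q.2‖ ∂ρ = ∫ x, ‖x‖ ∂ρ.fst + ∫ y, ‖y‖ ∂ρ.snd := by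
  rw [integral_add (f := fun q : E × F => ‖q.1‖) (g := fun q : E × F => ‖q.2‖)
      (h₁.comp_measurable measurable_fst) (h₂.comp_measurable measurable_snd),
    Measure.fst, Measure.snd,
    integral_map measurable_fst.aemeasurable continuous_norm.aestronglyMeasurable,
    integral_map measurable_snd.aemeasurable continuous_norm.aestronglyMeasurable]

end Moments

lemma norm_smul_sub_le {E : Type*} [SeminormedAddCommGroup E] [NormedSpace ℝ E]
    (g : E →ᵇ ℝ) (x y : E) : ‖g x • (y - x)‖ ≤ ‖g‖ * (‖x‖ + ‖y‖) := by
  rw [norm_smul]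
  exact mul_le_mul (g.norm_coe_le_norm x) ((norm_sub_le y x).trans_eq (add_comm _ _))
    (norm_nonneg _) (norm_nonneg g)

theorem limit_of_martingale_couplings_is_martingale_coupling_general
    {B : Type*} [NormedAddCommGroup B] [NormedSpace ℝ B] [CompleteSpace B]
    [MeasurableSpace B] [BorelSpace B] [SecondCountableTopology B]
    (μ ν : Measure B) [IsProbabilityMeasure μ] [IsProbabilityMeasure ν]
    (hμ1 : Integrable (fun x => x) μ) (hν1 : Integrable (fun x => x) ν)
    (μn νn : ℕ → Measure B)
    (hμconv : ∀ f : B → ℝ, Continuous f → (∃ C, ∀ x, |f x| ≤ C * (1 + ‖x‖)) →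
      Tendsto (fun n => ∫ x, f x ∂(μn n)) atTop (𝓝 (∫ x, f x ∂μ)))
    (hνconv : ∀ f : B → ℝ, Continuous f → (∃ C, ∀ x, |f x| ≤ C * (1 + ‖x‖)) →
      Tendsto (fun n => ∫ x, f x ∂(νn n)) atTop (𝓝 (∫ x, f x ∂ν)))
    (πn : ℕ → Measure (B × B)) (hπnprob : ∀ n, IsProbabilityMeasure (πn n))
    (hπnfst : ∀ n, (πn n).fst = μn n) (hπnsnd : ∀ n, (πn n).snd = νn n)
    (hπnmart : ∀ n, ∀ g : B →ᵇ ℝ, ∫ q : B × B, g q.1 • (q.2 - q.1) ∂(πn n) = 0)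
    (πt : Measure (B × B)) [IsProbabilityMeasure πt]
    (hπconv : ∀ f : (B × B) →ᵇ ℝ,
      Tendsto (fun n => ∫ q, f q ∂(πn n)) atTop (𝓝 (∫ q, f q ∂πt))) :
    πt.fst = μ ∧ πt.snd = ν ∧
      ∀ g : B →ᵇ ℝ, ∫ q : B × B, g q.1 • (q.2 - q.1) ∂πt = 0 := by
  simp only [← hπnfst] at hμconv
  simp only [← hπnsnd] at hνconv
  have hfst : πt.fst = μ := map_eq_of_tendsto_integral hπconv continuous_fst fun F =>
    hμconv F F.continuous F.exists_abs_le_mul_one_add_norm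
  have hsnd : πt.snd = ν := map_eq_of_tendsto_integral hπconv continuous_snd fun F =>
    hνconv F F.continuous F.exists_abs_le_mul_one_add_norm
  have linear_growth_norm : ∃ C, ∀ x : B, |‖x‖| ≤ C * (1 + ‖x‖) := ⟨1, fun x => by simp⟩
  have linear_growth_one_add_norm : ∃ C, ∀ x : B, |1 + ‖x‖| ≤ C * (1 + ‖x‖) :=
    ⟨1, fun x => by rw [one_mul, abs_of_nonneg (by positivity)]⟩
  have hint₁ := eventually_integrable_norm_of_tendsto hμ1.norm
    (hμconv _ (continuous_const.add continuous_norm) linear_growth_one_add_norm)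
  have hint₂ := eventually_integrable_norm_of_tendsto hν1.norm
    (hνconv _ (continuous_const.add continuous_norm) linear_growth_one_add_norm)
  have hfst₁ : Integrable (fun x => ‖x‖) πt.fst := hfst ▸ hμ1.norm
  have hsnd₁ : Integrable (fun y => ‖y‖) πt.snd := hsnd ▸ hν1.norm
  have hmom : Tendsto (fun n => ∫ q : B × B, ‖q.1‖ + ‖q.2‖ ∂πn n) atTop
      (𝓝 (∫ q : B × B, ‖q.1‖ + ‖q.2‖ ∂πt)) := by
    rw [integral_norm_fst_add_norm_snd hfst₁ hsnd₁, hfst, hsnd]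
    refine ((hμconv _ continuous_norm linear_growth_norm).add
      (hνconv _ continuous_norm linear_growth_norm)).congr' ?_
    filter_upwards [hint₁, hint₂] with n h₁ h₂
    exact (integral_norm_fst_add_norm_snd h₁ h₂).symm
  refine ⟨hfst, hsnd, fun g => integral_eq_zero_of_tendsto_of_norm_le hπconv
    ((g.continuous.comp continuous_fst).smul (continuous_snd.sub continuous_fst))
    (continuous_norm.comp continuous_fst |>.add (continuous_norm.comp continuous_snd))
    (fun q => norm_smul_sub_le g q.1 q.2)
    ((hint₁.and hint₂).mono fun n h => integrable_norm_fst_add_norm_snd h.1 h.2)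
    (integrable_norm_fst_add_norm_snd hfst₁ hsnd₁) hmom (.of_forall (hπnmart · g))⟩

theorem limit_of_martingale_couplings_is_martingale_coupling
    {B : Type*} [NormedAddCommGroup B] [NormedSpace ℝ B] [CompleteSpace B]
    [MeasurableSpace B] [BorelSpace B] [SecondCountableTopology B]
    (μ ν : Measure B) [IsProbabilityMeasure μ] [IsProbabilityMeasure ν]
    (hμ1 : Integrable (fun x => x) μ) (hν1 : Integrable (fun x => x) ν)
    (hcx : ∀ f : B → ℝ, (∃ K, LipschitzWith K f) → ConvexOn ℝ Set.univ f →
      ∫ x, f x ∂μ ≤ ∫ x, f x ∂ν)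
    (μn νn : ℕ → Measure B)
    (hμn : ∀ n, IsProbabilityMeasure (μn n)) (hνn : ∀ n, IsProbabilityMeasure (νn n))
    (hμconv : ∀ f : B → ℝ, Continuous f → (∃ C, ∀ x, |f x| ≤ C * (1 + ‖x‖)) →
      Tendsto (fun n => ∫ x, f x ∂(μn n)) atTop (𝓝 (∫ x, f x ∂μ)))
    (hνconv : ∀ f : B → ℝ, Continuous f → (∃ C, ∀ x, |f x| ≤ C * (1 + ‖x‖)) →
      Tendsto (fun n => ∫ x, f x ∂(νn n)) atTop (𝓝 (∫ x, f x ∂ν)))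
    (πn : ℕ → Measure (B × B)) (hπnprob : ∀ n, IsProbabilityMeasure (πn n))
    (hπnfst : ∀ n, (πn n).fst = μn n) (hπnsnd : ∀ n, (πn n).snd = νn n)
    (hπnmart : ∀ n, ∀ g : B →ᵇ ℝ, ∫ q : B × B, g q.1 • (q.2 - q.1) ∂(πn n) = 0)
    (πt : Measure (B × B)) [IsProbabilityMeasure πt]
    (hπconv : ∀ f : (B × B) →ᵇ ℝ,
      Tendsto (fun n => ∫ q, f q ∂(πn n)) atTop (𝓝 (∫ q, f q ∂πt))) :
    πt.fst = μ ∧ πt.snd = ν ∧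
      ∀ g : B →ᵇ ℝ, ∫ q : B × B, g q.1 • (q.2 - q.1) ∂πt = 0 :=
  limit_of_martingale_couplings_is_martingale_coupling_general μ ν hμ1 hν1 μn νn hμconv hνconv πn
    hπnprob hπnfst hπnsnd hπnmart πt hπconv
end

section
/- Let Z, G ∈ L¹(ℙ, B). Then Z = 𝔼[G | 𝒢] for some sub-σ-algebra 𝒢 ⊆ 𝓕 if and only if f(Z) ≤ 𝔼[f(G) | 𝒢'] a.s. for some sub-σ-algebra 𝒢' and all Lipschitz convex f : B → ℝ. Moreover, in that case Z = 𝔼[G | σ(Z)] and f(Z) ≤ 𝔼[f(G) | Z] for all such f. -/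
/-!
Conditional Jensen gives the forward implication. Conversely, testing the convex order on `ℓ`
and `-ℓ` for continuous linear functionals `ℓ`, which commute with conditional expectation, gives
`ℓ Z = ℓ 𝔼[G | 𝒢']` a.e., and in a separable space the functionals separate points. Finally, if
`Z = 𝔼[G | 𝒢]` a.e., each set `Z⁻¹ A` is a.e. the `𝒢`-set `𝔼[G | 𝒢]⁻¹ A`, on which `Z` and `G`
have the same integral; hence `Z = 𝔼[G | σ(Z)]`.
-/

open MeasureTheory Set

theorem LipschitzWith.integrable_comp {Ω E F : Type*} [NormedAddCommGroup E]
    [NormedAddCommGroup F] {m0 : MeasurableSpace Ω} {μ : Measure Ω} [IsFiniteMeasure μ]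
    {G : Ω → E} {f : E → F} {K : NNReal} (hf : LipschitzWith K f) (hG : Integrable G μ) :
    Integrable (fun ω => f (G ω)) μ := by
  refine Integrable.mono' ((integrable_const ‖f 0‖).add (hG.norm.const_mul K))
    (hf.continuous.comp_aestronglyMeasurable hG.1) (Filter.Eventually.of_forall fun ω => ?_)
  have h := hf.norm_sub_le (G ω) 0
  rw [sub_zero] at h
  simp only [Pi.add_apply]
  linarith [norm_le_norm_add_norm_sub' (f (G ω)) (f 0)]

section

variable {Ω E : Type*} [NormedAddCommGroup E] [NormedSpace ℝ E] [CompleteSpace E]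
  {m m0 : MeasurableSpace Ω} {μ : Measure Ω} {Z G : Ω → E}

theorem convex_comp_ae_le_condExp_of_ae_eq_condExp [IsFiniteMeasure μ] (hm : m ≤ m0)
    (hG : Integrable G μ) (hZG : Z =ᵐ[μ] μ[G | m]) (f : E → ℝ) (hfL : ∃ K, LipschitzWith K f)
    (hfc : ConvexOn ℝ univ f) :
    (fun ω => f (Z ω)) ≤ᵐ[μ] μ[fun ω => f (G ω) | m] := by
  obtain ⟨K, hK⟩ := hfL
  have hJensen := hfc.map_condExp_le_univ hm hK.continuous.lowerSemicontinuous hG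
    (hK.integrable_comp hG)
  filter_upwards [hZG, hJensen] with ω hZω hω
  rwa [hZω]

theorem ae_eq_condExp_of_forall_dual_le [SecondCountableTopology E]
    (h : ∀ ℓ : StrongDual ℝ E, (fun ω => ℓ (Z ω)) ≤ᵐ[μ] μ[fun ω => ℓ (G ω) | m])
    (hG : Integrable G μ) : Z =ᵐ[μ] μ[G | m] := by
  have hdual (ℓ : StrongDual ℝ E) : (fun ω => ℓ (Z ω - μ[G | m] ω)) =ᵐ[μ] 0 := by
    filter_upwards [h ℓ, h (-ℓ), ℓ.comp_condExp_comm (m := m) hG,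
      (-ℓ).comp_condExp_comm (m := m) hG] with ω hle hge hcomm hcomm'
    have hle' := hle.trans_eq hcomm.symm
    have hge' := hge.trans_eq hcomm'.symm
    simp only [Function.comp_apply, neg_apply] at hle' hge'
    rw [map_sub, Pi.zero_apply]
    linarith
  filter_upwards [ae_eq_zero_of_forall_dual ℝ hdual] with ω hω
  exact sub_eq_zero.1 hω

theorem ae_eq_condExp_comap_of_ae_eq_condExp [MeasurableSpace E] [BorelSpace E]
    [SecondCountableTopology E] [IsFiniteMeasure μ] (hm : m ≤ m0) (hZm : Measurable Z)
    (hG : Integrable G μ) (hZG : Z =ᵐ[μ] μ[G | m]) :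
    Z =ᵐ[μ] μ[G | MeasurableSpace.comap Z inferInstance] := by
  set Y := μ[G | m]
  have hpre {A : Set E} : Z ⁻¹' A =ᵐ[μ] Y ⁻¹' A := by
    filter_upwards [hZG] with ω hω
    change (Z ω ∈ A) = (Y ω ∈ A)
    rw [hω]
  refine ae_eq_condExp_of_forall_setIntegral_eq hZm.comap_le hG
    (fun _ _ _ => (integrable_condExp.congr hZG.symm).integrableOn) ?_
    (Measurable.of_comap_le le_rfl).stronglyMeasurable.aestronglyMeasurable
  rintro - ⟨A, hA, rfl⟩ -
  calc ∫ ω in Z ⁻¹' A, Z ω ∂μ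
      = ∫ ω in Y ⁻¹' A, Y ω ∂μ := by
        rw [setIntegral_congr_set hpre.symm]
        exact setIntegral_congr_ae (hZm hA) (by filter_upwards [hZG] with ω hω _ using hω)
    _ = ∫ ω in Y ⁻¹' A, G ω ∂μ :=
        setIntegral_condExp hm hG (stronglyMeasurable_condExp.measurable hA)
    _ = ∫ ω in Z ⁻¹' A, G ω ∂μ := setIntegral_congr_set hpre.symm

end

theorem condexp_iff_convex_order_general
    {B : Type*} [NormedAddCommGroup B] [NormedSpace ℝ B] [CompleteSpace B]
    [MeasurableSpace B] [BorelSpace B] [SecondCountableTopology B]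
    {Ω : Type*} [m0 : MeasurableSpace Ω] (ℙ : Measure Ω) [IsProbabilityMeasure ℙ]
    (Z G : Ω → B) (hZm : Measurable Z) (hGi : Integrable G ℙ) :
    ((∃ 𝒢 : MeasurableSpace Ω, 𝒢 ≤ m0 ∧ Z =ᵐ[ℙ] ℙ[G | 𝒢]) ↔
      (∃ 𝒢' : MeasurableSpace Ω, 𝒢' ≤ m0 ∧
        ∀ f : B → ℝ, (∃ K, LipschitzWith K f) → ConvexOn ℝ Set.univ f →
          (fun ω => f (Z ω)) ≤ᵐ[ℙ] ℙ[fun ω => f (G ω) | 𝒢'])) ∧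
    ((∃ 𝒢 : MeasurableSpace Ω, 𝒢 ≤ m0 ∧ Z =ᵐ[ℙ] ℙ[G | 𝒢]) →
      (Z =ᵐ[ℙ] ℙ[G | MeasurableSpace.comap Z inferInstance] ∧
        ∀ f : B → ℝ, (∃ K, LipschitzWith K f) → ConvexOn ℝ Set.univ f →
          (fun ω => f (Z ω)) ≤ᵐ[ℙ] ℙ[fun ω => f (G ω) |
            MeasurableSpace.comap Z inferInstance])) := by
  refine ⟨⟨fun ⟨𝒢, h𝒢, hZG⟩ => ⟨𝒢, h𝒢, convex_comp_ae_le_condExp_of_ae_eq_condExp h𝒢 hGi hZG⟩,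
    fun ⟨𝒢', h𝒢', hconvex⟩ => ⟨𝒢', h𝒢', ?_⟩⟩, fun ⟨𝒢, h𝒢, hZG⟩ => ?_⟩
  · exact ae_eq_condExp_of_forall_dual_le
      (fun ℓ => hconvex ℓ ⟨_, ℓ.lipschitz⟩ (ℓ.toLinearMap.convexOn convex_univ)) hGi
  · have hZσ := ae_eq_condExp_comap_of_ae_eq_condExp h𝒢 hZm hGi hZG
    exact ⟨hZσ, convex_comp_ae_le_condExp_of_ae_eq_condExp hZm.comap_le hGi hZσ⟩

theorem condexp_iff_convex_order
    {B : Type*} [NormedAddCommGroup B] [NormedSpace ℝ B] [CompleteSpace B]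
    [MeasurableSpace B] [BorelSpace B] [SecondCountableTopology B]
    {Ω : Type*} [m0 : MeasurableSpace Ω] (ℙ : Measure Ω) [IsProbabilityMeasure ℙ]
    (Z G : Ω → B) (hZm : Measurable Z) (hGm : Measurable G)
    (hZi : Integrable Z ℙ) (hGi : Integrable G ℙ) :
    ((∃ 𝒢 : MeasurableSpace Ω, 𝒢 ≤ m0 ∧ Z =ᵐ[ℙ] ℙ[G | 𝒢]) ↔
      (∃ 𝒢' : MeasurableSpace Ω, 𝒢' ≤ m0 ∧
        ∀ f : B → ℝ, (∃ K, LipschitzWith K f) → ConvexOn ℝ Set.univ f →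
          (fun ω => f (Z ω)) ≤ᵐ[ℙ] ℙ[fun ω => f (G ω) | 𝒢'])) ∧
    ((∃ 𝒢 : MeasurableSpace Ω, 𝒢 ≤ m0 ∧ Z =ᵐ[ℙ] ℙ[G | 𝒢]) →
      (Z =ᵐ[ℙ] ℙ[G | MeasurableSpace.comap Z inferInstance] ∧
        ∀ f : B → ℝ, (∃ K, LipschitzWith K f) → ConvexOn ℝ Set.univ f →
          (fun ω => f (Z ω)) ≤ᵐ[ℙ] ℙ[fun ω => f (G ω) |
            MeasurableSpace.comap Z inferInstance])) :=
  condexp_iff_convex_order_general (m0 := m0) ℙ Z G hZm hGi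
end
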